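/- arXiv:2410.18604 — 3 statements merged into one kernel-verified Lean document; each statement's English description precedes it below -/
import Mathlib

section
/- For every i ∈ I, the endomorphisms σ_i and σ_i' of 𝒜 are mutually inverse: σ_i ∘ σ_i' = id_𝒜 and σ_i' ∘ σ_i = id_𝒜. In particular each σ_i is an F-algebra automorphism of 𝒜. -/
/-!
Braid group action on the twisted semi-derived Hall algebra (Contu, arXiv:2410.18604).

We work with the algebra `𝒜 = 𝒮𝒟ℋ_tw(C^b(𝒫))` given by its presentation
(Proposition `prop_presenentation_semiderived_E_i` of the paper): generators
`E_{i,m}`, `K_{i,m}`, `K_{i,m}⁻¹` (`i ∈ I`, `m ∈ ℤ`) over `F = ℚ(v^{1/2})`,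
subject to the relations (SD0)–(SD5).
-/

noncomputable section

namespace SDHall

/-- The field `ℚ(v^{1/2})` of rational functions over `ℚ` in one indeterminate `v^{1/2}`. -/
abbrev F₀ : Type := RatFunc ℚ

/-- The indeterminate `v^{1/2}`. -/
def sq : F₀ := RatFunc.X

/-- `v := (v^{1/2})²`. -/
def v : F₀ := sq ^ 2

/-- The sign `(-1)^n` for an integer `n`. -/
def sgn (n : ℤ) : ℤ := (((-1 : ℤˣ) ^ n : ℤˣ) : ℤ)

/-- Generators `E_{i,m}`, `K_{i,m}`, `K_{i,m}⁻¹` of the presented algebra. -/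
inductive Gen (I : Type) : Type
  | E : I → ℤ → Gen I
  | K : I → ℤ → Gen I
  | Kinv : I → ℤ → Gen I

variable {I : Type}

def e (i : I) (m : ℤ) : FreeAlgebra F₀ (Gen I) := FreeAlgebra.ι F₀ (Gen.E i m)
def κ (i : I) (m : ℤ) : FreeAlgebra F₀ (Gen I) := FreeAlgebra.ι F₀ (Gen.K i m)
def κ' (i : I) (m : ℤ) : FreeAlgebra F₀ (Gen I) := FreeAlgebra.ι F₀ (Gen.Kinv i m)

/-- The defining relations (SD0)–(SD5) of the twisted semi-derived Hall algebra:
(SD0) `K_{i,m}K_{i,m}⁻¹ = 1 = K_{i,m}⁻¹K_{i,m}`;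
(SD1) each `K_{i,m}` is central;
(SD2) `E_{i,m}E_{j,m} = E_{j,m}E_{i,m}` if `a_{ij} = 0`;
(SD3) `E_{i,m}²E_{j,m} − (v+v⁻¹)E_{i,m}E_{j,m}E_{i,m} + E_{j,m}E_{i,m}² = 0` if `a_{ij} = −1`;
(SD4) `E_{i,m+1}E_{j,m} = v^{a_{ij}}E_{j,m}E_{i,m+1} + δ_{ij}(1−v²)K_{i,m}`
      (split into the cases `i ≠ j` and `i = j`);
(SD5) `E_{j,r}E_{i,l} = v^{−(−1)^{r−l}a_{ij}}E_{i,l}E_{j,r}` for `r > l+1`. -/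
inductive Rel (a : I → I → ℤ) : FreeAlgebra F₀ (Gen I) → FreeAlgebra F₀ (Gen I) → Prop
  | sd0a (i : I) (m : ℤ) : Rel a (κ i m * κ' i m) 1
  | sd0b (i : I) (m : ℤ) : Rel a (κ' i m * κ i m) 1
  | sd1 (i : I) (m : ℤ) (x : FreeAlgebra F₀ (Gen I)) : Rel a (κ i m * x) (x * κ i m)
  | sd2 (i j : I) (m : ℤ) : a i j = 0 → Rel a (e i m * e j m) (e j m * e i m)
  | sd3 (i j : I) (m : ℤ) : a i j = -1 →
      Rel a (e i m ^ 2 * e j m - (v + v⁻¹) • (e i m * e j m * e i m) + e j m * e i m ^ 2) 0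
  | sd4_ne (i j : I) (m : ℤ) : i ≠ j →
      Rel a (e i (m + 1) * e j m) ((v ^ (a i j)) • (e j m * e i (m + 1)))
  | sd4_eq (i : I) (m : ℤ) :
      Rel a (e i (m + 1) * e i m)
        ((v ^ (a i i)) • (e i m * e i (m + 1)) + ((1 : F₀) - v ^ 2) • κ i m)
  | sd5 (i j : I) (r l : ℤ) : r > l + 1 →
      Rel a (e j r * e i l) ((v ^ (-(sgn (r - l)) * a i j)) • (e i l * e j r))

/-- The twisted semi-derived Hall algebra `𝒜`, presented by generators and relations. -/
abbrev A (a : I → I → ℤ) : Type := RingQuot (Rel a)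

/-- The generator `E_{i,m}` of `𝒜`. -/
def E (a : I → I → ℤ) (i : I) (m : ℤ) : A a := RingQuot.mkAlgHom F₀ (Rel a) (e i m)

/-- The generator `K_{i,m}` of `𝒜`. -/
def K (a : I → I → ℤ) (i : I) (m : ℤ) : A a := RingQuot.mkAlgHom F₀ (Rel a) (κ i m)

/-- The generator `K_{i,m}⁻¹` of `𝒜`. -/
def Kinv (a : I → I → ℤ) (i : I) (m : ℤ) : A a := RingQuot.mkAlgHom F₀ (Rel a) (κ' i m)

/-- `a` is a simply-laced generalized Cartan matrix: symmetric, `a_{ii} = 2`,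
and `a_{ij} ∈ {0, −1}` for `i ≠ j`. -/
def IsCartan (a : I → I → ℤ) : Prop :=
  (∀ i j, a i j = a j i) ∧ (∀ i, a i i = 2) ∧ ∀ i j, i ≠ j → a i j = 0 ∨ a i j = -1

/-- The element `(v^{1/2}E_{i,m}E_{j,m} − v^{−1/2}E_{j,m}E_{i,m})/(v − v^{−1})` of `𝒜`. -/
def T (a : I → I → ℤ) (i j : I) (m : ℤ) : A a :=
  (v - v⁻¹)⁻¹ • (sq • (E a i m * E a j m) - sq⁻¹ • (E a j m * E a i m))

/-- The defining formulas for the braid group operator `σᵢ` on the generators: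
`σᵢ(E_{i,m}) = E_{i,m+1}K_{i,m}⁻¹`;
`σᵢ(E_{j,m}) = (v^{1/2}E_{i,m}E_{j,m} − v^{−1/2}E_{j,m}E_{i,m})/(v − v^{−1})` if `a_{ij} = −1`;
`σᵢ(E_{j,m}) = E_{j,m}` if `a_{ij} = 0`;
`σᵢ(K_{i,m}) = K_{i,m}⁻¹`; `σᵢ(K_{j,m}) = K_{i,m}K_{j,m}` if `a_{ij} = −1`;
`σᵢ(K_{j,m}) = K_{j,m}` if `a_{ij} = 0`. -/
def SigmaSpec (a : I → I → ℤ) (i : I) (σ : A a →ₐ[F₀] A a) : Prop :=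
  (∀ m : ℤ, σ (E a i m) = E a i (m + 1) * Kinv a i m) ∧
  (∀ (j : I) (m : ℤ), a i j = -1 → σ (E a j m) = T a i j m) ∧
  (∀ (j : I) (m : ℤ), a i j = 0 → σ (E a j m) = E a j m) ∧
  (∀ m : ℤ, σ (K a i m) = Kinv a i m) ∧
  (∀ (j : I) (m : ℤ), a i j = -1 → σ (K a j m) = K a i m * K a j m) ∧
  (∀ (j : I) (m : ℤ), a i j = 0 → σ (K a j m) = K a j m)

/-- The defining formulas for the inverse operator `σᵢ'` on the generators:
`σᵢ'(E_{i,m}) = E_{i,m−1}K_{i,m−1}⁻¹`;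
`σᵢ'(E_{j,m}) = (v^{1/2}E_{j,m}E_{i,m} − v^{−1/2}E_{i,m}E_{j,m})/(v − v^{−1})` if `a_{ij} = −1`;
`σᵢ'(E_{j,m}) = E_{j,m}` if `a_{ij} = 0`;
`σᵢ'(K_{i,m}) = K_{i,m}⁻¹`; `σᵢ'(K_{j,m}) = K_{i,m}K_{j,m}` if `a_{ij} = −1`;
`σᵢ'(K_{j,m}) = K_{j,m}` if `a_{ij} = 0`. -/
def SigmaSpec' (a : I → I → ℤ) (i : I) (σ : A a →ₐ[F₀] A a) : Prop :=
  (∀ m : ℤ, σ (E a i m) = E a i (m - 1) * Kinv a i (m - 1)) ∧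
  (∀ (j : I) (m : ℤ), a i j = -1 → σ (E a j m) = T a j i m) ∧
  (∀ (j : I) (m : ℤ), a i j = 0 → σ (E a j m) = E a j m) ∧
  (∀ m : ℤ, σ (K a i m) = Kinv a i m) ∧
  (∀ (j : I) (m : ℤ), a i j = -1 → σ (K a j m) = K a i m * K a j m) ∧
  (∀ (j : I) (m : ℤ), a i j = 0 → σ (K a j m) = K a j m)

end SDHall

open SDHall

/-!
Both composites are algebra maps, so it suffices to check them on the generators `E_{j,m}` and
`K_{j,m}`; the `K⁻¹`'s follow by uniqueness of inverses. On the `K`'s, `σᵢ` and `σᵢ'` both act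
by the simple reflection `sᵢ`, an involution, and on `E_{i,m}` the index shifts cancel against
`K_{i,m}K_{i,m}⁻¹ = 1`. The one real computation is `E_{j,m}` with `a_{ij} = −1`: after the
central factor `K_{i,m}⁻¹` is pulled out, one is left with a nested twisted commutator of
`E_{i,m}`, `E_{j,m}` and `E_{i,m+1}`. Relation (SD4) moves `E_{i,m+1}` past `E_{j,m}` and
`E_{i,m}` at the cost of powers of `v` and a term `(1 − v²)K_{i,m}`; the cubic terms cancel
because `v = (v^{1/2})²`, leaving exactly `K_{i,m}E_{j,m}`.
-/

section TwistedCommutator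

variable {𝕜 R S : Type*} [Field 𝕜] [Ring R] [Algebra 𝕜 R] [Ring S] [Algebra 𝕜 S]

/-- With `q = v^{1/2}`, this is the element `(v^{1/2}xy − v^{−1/2}yx)/(v − v^{−1})` appearing in
`σᵢ` and `σᵢ'`. -/
def twistedComm (q : 𝕜) (x y : R) : R :=
  (q ^ 2 - (q ^ 2)⁻¹)⁻¹ • (q • (x * y) - q⁻¹ • (y * x))

lemma map_twistedComm (f : R →ₐ[𝕜] S) (q : 𝕜) (x y : R) :
    f (twistedComm q x y) = twistedComm q (f x) (f y) := by
  simp only [twistedComm, map_smul, map_sub, map_mul]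

lemma twistedComm_mul_right {q : 𝕜} {x c : R} (hxc : Commute x c) (y : R) :
    twistedComm q x (y * c) = twistedComm q x y * c := by
  simp only [twistedComm, smul_mul_assoc, sub_mul, mul_assoc, hxc.eq]

lemma twistedComm_mul_left {q : 𝕜} {c y : R} (hcy : Commute c y) (x : R) :
    twistedComm q (x * c) y = twistedComm q x y * c := by
  simp only [twistedComm, smul_mul_assoc, sub_mul, mul_assoc, hcy.eq]

lemma twistedComm_twistedComm_left {q : 𝕜} (hq0 : q ≠ 0) (hq : q ^ 4 ≠ 1) {x y z k : R}
    (hzy : z * y = (q ^ 2)⁻¹ • (y * z))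
    (hzx : z * x = (q ^ 2) ^ 2 • (x * z) + (1 - (q ^ 2) ^ 2) • k) (hyk : Commute y k) :
    twistedComm q (twistedComm q x y) z = k * y := by
  have hq' : q ^ 4 - 1 ≠ 0 := sub_ne_zero.2 hq
  have hzxy : z * (x * y) = q ^ 2 • (x * (y * z)) + (1 - (q ^ 2) ^ 2) • (k * y) := by
    rw [← mul_assoc, hzx, add_mul, smul_mul_assoc, smul_mul_assoc, mul_assoc, hzy,
      mul_smul_comm, smul_smul, pow_two (q ^ 2), mul_inv_cancel_right₀ (pow_ne_zero 2 hq0)]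
  have hzyx : z * (y * x) = q ^ 2 • (y * (x * z)) + ((q ^ 2)⁻¹ - q ^ 2) • (k * y) := by
    rw [← mul_assoc, hzy, smul_mul_assoc, mul_assoc, hzx, mul_add, mul_smul_comm,
      mul_smul_comm, hyk.eq]
    match_scalars <;> field_simp
  simp only [twistedComm, smul_mul_assoc, mul_smul_comm, sub_mul, mul_sub, mul_assoc, hzxy, hzyx]
  match_scalars <;> field_simp <;> ring

lemma twistedComm_twistedComm_right {q : 𝕜} (hq0 : q ≠ 0) (hq : q ^ 4 ≠ 1) {x y z k : R}
    (hyz : y * z = (q ^ 2)⁻¹ • (z * y))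
    (hxz : x * z = (q ^ 2) ^ 2 • (z * x) + (1 - (q ^ 2) ^ 2) • k) (hyk : Commute y k) :
    twistedComm q z (twistedComm q y x) = k * y := by
  have hq' : q ^ 4 - 1 ≠ 0 := sub_ne_zero.2 hq
  have hyxz : y * x * z = q ^ 2 • (z * y * x) + (1 - (q ^ 2) ^ 2) • (y * k) := by
    rw [mul_assoc, hxz, mul_add, mul_smul_comm, mul_smul_comm, ← mul_assoc, hyz,
      smul_mul_assoc, smul_smul]
    match_scalars <;> field_simp
  have hxyz : x * y * z = q ^ 2 • (z * x * y) + ((q ^ 2)⁻¹ - q ^ 2) • (k * y) := by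
    rw [mul_assoc, hyz, mul_smul_comm, ← mul_assoc, hxz, add_mul, smul_mul_assoc,
      smul_mul_assoc]
    match_scalars <;> field_simp
  simp only [twistedComm, smul_mul_assoc, mul_smul_comm, sub_mul, mul_sub, ← mul_assoc, hyxz,
    hxyz, hyk.eq]
  match_scalars <;> field_simp <;> ring

end TwistedCommutator

namespace SDHall

open RingQuot

variable {I : Type} {a : I → I → ℤ}

lemma sq_ne_zero : sq ≠ 0 := RatFunc.X_ne_zero

lemma sq_pow_four_ne_one : sq ^ 4 ≠ 1 := by
  intro h
  have h := congrArg RatFunc.intDegree h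
  rw [sq, ← RatFunc.algebraMap_X, ← map_pow, RatFunc.intDegree_polynomial,
    Polynomial.natDegree_X_pow, RatFunc.intDegree_one] at h
  omega

lemma T_eq_twistedComm (i j : I) (m : ℤ) : T a i j m = twistedComm sq (E a i m) (E a j m) := rfl

lemma IsCartan.eq_or_eq_zero_or_eq_neg_one (hA : IsCartan a) (i j : I) :
    j = i ∨ a i j = 0 ∨ a i j = -1 :=
  (eq_or_ne j i).imp_right fun hji => hA.2.2 i j hji.symm

lemma K_mul_Kinv (i : I) (m : ℤ) : K a i m * Kinv a i m = 1 := by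
  simpa only [map_mul, map_one, K, Kinv] using mkAlgHom_rel F₀ (Rel.sd0a (a := a) i m)

lemma Kinv_mul_K (i : I) (m : ℤ) : Kinv a i m * K a i m = 1 := by
  simpa only [map_mul, map_one, K, Kinv] using mkAlgHom_rel F₀ (Rel.sd0b (a := a) i m)

lemma commute_K (i : I) (m : ℤ) (x : A a) : Commute (K a i m) x := by
  obtain ⟨y, rfl⟩ := mkAlgHom_surjective F₀ (Rel a) x
  have h := mkAlgHom_rel F₀ (Rel.sd1 (a := a) i m y)
  rw [map_mul, map_mul] at h
  exact h

lemma commute_Kinv (i : I) (m : ℤ) (x : A a) : Commute (Kinv a i m) x :=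
  (commute_K i m x).units_inv_left (u := ⟨K a i m, Kinv a i m, K_mul_Kinv i m, Kinv_mul_K i m⟩)

lemma K_mul_mul_Kinv (i : I) (m : ℤ) (x : A a) : K a i m * x * Kinv a i m = x := by
  rw [(commute_K i m x).eq, mul_assoc, K_mul_Kinv, mul_one]

lemma E_add_one_mul_E_of_eq_neg_one (hA : IsCartan a) {i j : I} (hij : a i j = -1) (m : ℤ) :
    E a i (m + 1) * E a j m = v⁻¹ • (E a j m * E a i (m + 1)) := by
  have hne : i ≠ j := by rintro rfl; rw [hA.2.1] at hij; omega
  simpa only [map_mul, map_smul, hij, zpow_neg_one, E] using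
    mkAlgHom_rel F₀ (Rel.sd4_ne (a := a) i j m hne)

lemma E_add_one_mul_E_self (hA : IsCartan a) (i : I) (m : ℤ) :
    E a i (m + 1) * E a i m = v ^ 2 • (E a i m * E a i (m + 1)) + (1 - v ^ 2) • K a i m := by
  simpa only [map_mul, map_smul, map_add, hA.2.1, zpow_ofNat, E, K] using
    mkAlgHom_rel F₀ (Rel.sd4_eq (a := a) i m)

lemma algHom_ext_of_E_K {f g : A a →ₐ[F₀] A a} (hE : ∀ j m, f (E a j m) = g (E a j m))
    (hK : ∀ j m, f (K a j m) = g (K a j m)) : f = g := by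
  have hKinv : ∀ j m, f (Kinv a j m) = g (Kinv a j m) := fun j m =>
    left_inv_eq_right_inv (by rw [← map_mul, Kinv_mul_K, map_one])
      (by rw [hK, ← map_mul, K_mul_Kinv, map_one])
  refine ringQuot_ext' (S := F₀) f g (FreeAlgebra.hom_ext (funext fun x => ?_))
  cases x with
  | E j m => exact hE j m
  | K j m => exact hK j m
  | Kinv j m => exact hKinv j m

/-- The common action of `σᵢ` and `σᵢ'` on the `K`'s: the simple reflection `sᵢ`. -/
def ReflectsK (a : I → I → ℤ) (i : I) (τ : A a →ₐ[F₀] A a) : Prop :=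
  (∀ m, τ (K a i m) = Kinv a i m) ∧
  (∀ j m, a i j = -1 → τ (K a j m) = K a i m * K a j m) ∧
  (∀ j m, a i j = 0 → τ (K a j m) = K a j m)

lemma SigmaSpec.reflectsK {i : I} {σ : A a →ₐ[F₀] A a} (hσ : SigmaSpec a i σ) :
    ReflectsK a i σ :=
  hσ.2.2.2

lemma SigmaSpec'.reflectsK {i : I} {σ : A a →ₐ[F₀] A a} (hσ : SigmaSpec' a i σ) :
    ReflectsK a i σ :=
  hσ.2.2.2

namespace ReflectsK

variable {i : I} {τ τ' : A a →ₐ[F₀] A a}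

lemma map_Kinv_self (hτ : ReflectsK a i τ) (m : ℤ) : τ (Kinv a i m) = K a i m :=
  left_inv_eq_right_inv (by rw [← map_mul, Kinv_mul_K, map_one]) (by rw [hτ.1, Kinv_mul_K])

lemma map_map_K (hA : IsCartan a) (hτ : ReflectsK a i τ) (hτ' : ReflectsK a i τ') (j : I)
    (m : ℤ) : τ (τ' (K a j m)) = K a j m := by
  obtain rfl | hj | hj := hA.eq_or_eq_zero_or_eq_neg_one i j
  · rw [hτ'.1, hτ.map_Kinv_self]
  · rw [hτ'.2.2 j m hj, hτ.2.2 j m hj]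
  · rw [hτ'.2.1 j m hj, map_mul, hτ.1, hτ.2.1 j m hj, ← mul_assoc, Kinv_mul_K, one_mul]

end ReflectsK

variable {i : I} {σ σ' : A a →ₐ[F₀] A a}

lemma sigma_sigma'_E (hA : IsCartan a) (hσ : SigmaSpec a i σ) (hσ' : SigmaSpec' a i σ')
    (j : I) (m : ℤ) : σ (σ' (E a j m)) = E a j m := by
  obtain rfl | hj | hj := hA.eq_or_eq_zero_or_eq_neg_one i j
  · rw [hσ'.1, map_mul, hσ.1, hσ.reflectsK.map_Kinv_self, sub_add_cancel, mul_assoc,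
      Kinv_mul_K, mul_one]
  · rw [hσ'.2.2.1 j m hj, hσ.2.2.1 j m hj]
  · have hnested : twistedComm sq (twistedComm sq (E a i m) (E a j m)) (E a i (m + 1)) =
        K a i m * E a j m :=
      twistedComm_twistedComm_left sq_ne_zero sq_pow_four_ne_one
        (E_add_one_mul_E_of_eq_neg_one hA hj m) (E_add_one_mul_E_self hA i m)
        (commute_K i m _).symm
    rw [hσ'.2.1 j m hj, T_eq_twistedComm, map_twistedComm, hσ.2.1 j m hj, hσ.1,
      T_eq_twistedComm, twistedComm_mul_right (commute_Kinv i m _).symm, hnested,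
      K_mul_mul_Kinv]

lemma sigma'_sigma_E (hA : IsCartan a) (hσ : SigmaSpec a i σ) (hσ' : SigmaSpec' a i σ')
    (j : I) (m : ℤ) : σ' (σ (E a j m)) = E a j m := by
  obtain ⟨n, rfl⟩ : ∃ n, m = n + 1 := ⟨m - 1, (sub_add_cancel m 1).symm⟩
  obtain rfl | hj | hj := hA.eq_or_eq_zero_or_eq_neg_one i j
  · rw [hσ.1, map_mul, hσ'.1, hσ'.reflectsK.map_Kinv_self, add_sub_cancel_right, mul_assoc,
      Kinv_mul_K, mul_one]
  · rw [hσ.2.2.1 j _ hj, hσ'.2.2.1 j _ hj]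
  · have hnested : twistedComm sq (E a i n) (twistedComm sq (E a j (n + 1)) (E a i (n + 1))) =
        K a i n * E a j (n + 1) :=
      twistedComm_twistedComm_right sq_ne_zero sq_pow_four_ne_one
        (E_add_one_mul_E_of_eq_neg_one hA (hA.1 i j ▸ hj) n) (E_add_one_mul_E_self hA i n)
        (commute_K i n _).symm
    rw [hσ.2.1 j _ hj, T_eq_twistedComm, map_twistedComm, hσ'.2.1 j _ hj, hσ'.1,
      add_sub_cancel_right, T_eq_twistedComm, twistedComm_mul_left (commute_Kinv i n _), hnested,
      K_mul_mul_Kinv]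

end SDHall

theorem sigma_sigma'_inverse_general (I : Type) (a : I → I → ℤ)
    (hA : IsCartan a) (i : I)
    (σ σ' : A a →ₐ[F₀] A a) (hσ : SigmaSpec a i σ) (hσ' : SigmaSpec' a i σ') :
    σ.comp σ' = AlgHom.id F₀ (A a) ∧ σ'.comp σ = AlgHom.id F₀ (A a) :=
  ⟨algHom_ext_of_E_K (sigma_sigma'_E hA hσ hσ')
      (hσ.reflectsK.map_map_K hA hσ'.reflectsK),
    algHom_ext_of_E_K (sigma'_sigma_E hA hσ hσ')
      (hσ'.reflectsK.map_map_K hA hσ.reflectsK)⟩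

/-- The endomorphisms `σᵢ` and `σᵢ'` of `𝒜` are mutually inverse; in
particular each `σᵢ` is an `F`-algebra automorphism of `𝒜`. -/
theorem sigma_sigma'_inverse (I : Type) [Fintype I] (a : I → I → ℤ)
    (hA : IsCartan a) (i : I)
    (σ σ' : A a →ₐ[F₀] A a) (hσ : SigmaSpec a i σ) (hσ' : SigmaSpec' a i σ') :
    σ.comp σ' = AlgHom.id F₀ (A a) ∧ σ'.comp σ = AlgHom.id F₀ (A a) :=
  sigma_sigma'_inverse_general I a hA i σ σ' hσ hσ'
end
end

section
/- Let i, j ∈ I with a_{ij} = −1 and m ∈ ℤ. Set F := E_{i,m+1}K_{i,m}^{−1} and G := (v^{1/2}E_{i,m}E_{j,m} − v^{−1/2}E_{j,m}E_{i,m})/(v − v^{−1}) in 𝒜. Then the quantum Serre relation holds for F and G: F²G − (v + v^{−1})FGF + GF² = 0. -/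
/-!
Braid group action on the twisted semi-derived Hall algebra (Contu, arXiv:2410.18604).

We work with the algebra `𝒜 = 𝒮𝒟ℋ_tw(C^b(𝒫))` given by its presentation
(Proposition `prop_presenentation_semiderived_E_i` of the paper): generators
`E_{i,m}`, `K_{i,m}`, `K_{i,m}⁻¹` (`i ∈ I`, `m ∈ ℤ`) over `F = ℚ(v^{1/2})`,
subject to the relations (SD0)–(SD5).
-/

noncomputable section

open SDHall

-- basic scalar facts
lemma hs_ne : (sq : F₀) ≠ 0 := RatFunc.X_ne_zero
lemma hv_ne : (v : F₀) ≠ 0 := pow_ne_zero _ hs_ne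

section
variable {I : Type} (a : I → I → ℤ)

lemma K_central (i : I) (m : ℤ) (y : A a) : K a i m * y = y * K a i m := by
  obtain ⟨x, rfl⟩ := RingQuot.mkAlgHom_surjective F₀ (Rel a) y
  have := RingQuot.mkAlgHom_rel F₀ (Rel.sd1 (a := a) i m x)
  simpa [K, map_mul] using this

lemma K_Kinv (i : I) (m : ℤ) : K a i m * Kinv a i m = 1 := by
  have := RingQuot.mkAlgHom_rel F₀ (Rel.sd0a (a := a) i m)
  simpa [K, Kinv, map_mul] using this

lemma Kinv_central (i : I) (m : ℤ) (y : A a) : Kinv a i m * y = y * Kinv a i m := by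
  have h1 : Kinv a i m * K a i m = 1 := by
    have := RingQuot.mkAlgHom_rel F₀ (Rel.sd0b (a := a) i m)
    simpa [K, Kinv, map_mul] using this
  calc Kinv a i m * y = Kinv a i m * (y * (K a i m * Kinv a i m)) := by rw [K_Kinv, mul_one]
    _ = Kinv a i m * (K a i m * y * Kinv a i m) := by rw [← mul_assoc y, ← K_central]
    _ = (Kinv a i m * K a i m) * (y * Kinv a i m) := by noncomm_ring
    _ = y * Kinv a i m := by rw [h1, one_mul]

lemma eAB (i : I) (m : ℤ) (h2 : a i i = 2) :
    E a i (m+1) * E a i m = (v^2) • (E a i m * E a i (m+1)) + ((1:F₀) - v^2) • K a i m := by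
  have := RingQuot.mkAlgHom_rel F₀ (Rel.sd4_eq (a := a) i m)
  simp only [map_add, map_mul, map_smul] at this
  rw [h2] at this
  simpa [E, K, zpow_two, pow_two] using this

lemma eAC (i j : I) (m : ℤ) (hij : a i j = -1) (h2 : a i i = 2) :
    E a i (m+1) * E a j m = v⁻¹ • (E a j m * E a i (m+1)) := by
  have hne : i ≠ j := by rintro rfl; rw [h2] at hij; norm_num at hij
  have := RingQuot.mkAlgHom_rel F₀ (Rel.sd4_ne (a := a) i j m hne)
  simp only [map_mul, map_smul] at this
  rw [hij] at this
  simpa [E, zpow_neg_one] using this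

end

lemma abstract_serre {K M : Type} [Field K] [Ring M] [Algebra K M]
    (s w c : K) (hs : s ≠ 0) (hw : w ≠ 0)
    (A B C K0 Ki : M)
    (hAB : A * B = (w^2) • (B * A) + ((1:K) - w^2) • K0)
    (hAC : A * C = w⁻¹ • (C * A))
    (hK : ∀ x, K0 * x = x * K0) (hKi : ∀ x, Ki * x = x * Ki) :
    (A * Ki)^2 * (c • (s • (B * C) - s⁻¹ • (C * B)))
      - (w + w⁻¹) • ((A * Ki) * (c • (s • (B * C) - s⁻¹ • (C * B))) * (A * Ki))
      + (c • (s • (B * C) - s⁻¹ • (C * B))) * (A * Ki)^2 = 0 := by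
  have swap : ∀ (x y z : M), (∀ u, x * u = u * x) → y * (x * z) = x * (y * z) := by
    intro x y z h; rw [← mul_assoc, ← h, mul_assoc]
  have hABx : ∀ x, A * (B * x) = (w^2) • (B * (A * x)) + ((1:K) - w^2) • (K0 * x) := by
    intro x; rw [← mul_assoc, hAB, add_mul, smul_mul_assoc, smul_mul_assoc, mul_assoc]
  have hACx : ∀ x, A * (C * x) = w⁻¹ • (C * (A * x)) := by
    intro x; rw [← mul_assoc, hAC, smul_mul_assoc, mul_assoc]
  have kiA : ∀ z, A * (Ki * z) = Ki * (A * z) := fun z => swap Ki A z hKi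
  have kiB : ∀ z, B * (Ki * z) = Ki * (B * z) := fun z => swap Ki B z hKi
  have kiC : ∀ z, C * (Ki * z) = Ki * (C * z) := fun z => swap Ki C z hKi
  have kiAt : A * Ki = Ki * A := (hKi A).symm
  have kiBt : B * Ki = Ki * B := (hKi B).symm
  have kiCt : C * Ki = Ki * C := (hKi C).symm
  have k0A : ∀ z, A * (K0 * z) = K0 * (A * z) := fun z => swap K0 A z hK
  have k0B : ∀ z, B * (K0 * z) = K0 * (B * z) := fun z => swap K0 B z hK
  have k0C : ∀ z, C * (K0 * z) = K0 * (C * z) := fun z => swap K0 C z hK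
  have k0Ki : ∀ z, Ki * (K0 * z) = K0 * (Ki * z) := fun z => swap K0 Ki z hK
  have k0At : A * K0 = K0 * A := (hK A).symm
  have k0Bt : B * K0 = K0 * B := (hK B).symm
  have k0Ct : C * K0 = K0 * C := (hK C).symm
  have k0Kit : Ki * K0 = K0 * Ki := (hK Ki).symm
  simp only [pow_two, mul_add, add_mul, mul_sub, sub_mul, smul_mul_assoc, mul_smul_comm,
    smul_smul, smul_sub, smul_add, mul_assoc, hABx, hACx, hAB, hAC,
    kiA, kiB, kiC, kiAt, kiBt, kiCt, k0A, k0B, k0C, k0Ki, k0At, k0Bt, k0Ct, k0Kit]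
  match_scalars
  all_goals (ring_nf; field_simp; ring)

/-- For `a_{ij} = −1` and `m ∈ ℤ`, set `F := E_{i,m+1}K_{i,m}⁻¹` and
`G := (v^{1/2}E_{i,m}E_{j,m} − v^{−1/2}E_{j,m}E_{i,m})/(v − v^{−1})`. Then
`F²G − (v + v⁻¹)FGF + GF² = 0` in `𝒜`. -/
theorem serre_for_sigma_images (I : Type) [Fintype I] (a : I → I → ℤ)
    (hA : IsCartan a) (i j : I) (hij : a i j = -1) (m : ℤ) :
    (E a i (m + 1) * Kinv a i m) ^ 2 * (T a i j m)
      - (v + v⁻¹) • ((E a i (m + 1) * Kinv a i m) * T a i j m * (E a i (m + 1) * Kinv a i m))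
      + (T a i j m) * (E a i (m + 1) * Kinv a i m) ^ 2 = 0 := by
  
  obtain ⟨hsym, hdiag, -⟩ := hA
  exact abstract_serre SDHall.sq v ((v - v⁻¹)⁻¹) hs_ne hv_ne
    (E a i (m+1)) (E a i m) (E a j m) (K a i m) (Kinv a i m)
    (eAB a i m (hdiag i)) (eAC a i j m hij (hdiag i))
    (K_central a i m) (Kinv_central a i m)
end
end

section
/- Let i, j, k ∈ I with a_{ij} = 0, a_{ik} = −1 and a_{jk} = −1, and let m ∈ ℤ. Set F_i := (v^{1/2}E_{k,m}E_{i,m} − v^{−1/2}E_{i,m}E_{k,m})/(v − v^{−1}) and F_j := (v^{1/2}E_{k,m}E_{j,m} − v^{−1/2}E_{j,m}E_{k,m})/(v − v^{−1}) in 𝒜. Then F_i and F_j commute: F_i F_j = F_j F_i. -/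
/-!
Braid group action on the twisted semi-derived Hall algebra (Contu, arXiv:2410.18604).

We work with the algebra `𝒜 = 𝒮𝒟ℋ_tw(C^b(𝒫))` given by its presentation
(Proposition `prop_presenentation_semiderived_E_i` of the paper): generators
`E_{i,m}`, `K_{i,m}`, `K_{i,m}⁻¹` (`i ∈ I`, `m ∈ ℤ`) over `F = ℚ(v^{1/2})`,
subject to the relations (SD0)–(SD5).
-/

noncomputable section

/-!
With `X = E_{i,m}`, `Y = E_{j,m}`, `Z = E_{k,m}` only three relations enter: `XY = YX` (SD2) and
the Serre relations (SD3) for the pairs `(k, i)` and `(k, j)`. Up to the scalar `(v - v⁻¹)⁻²`,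
`F_i F_j - F_j F_i = v (ZXZY - ZYZX) + v⁻¹ (XZYZ - YZXZ) - (XZ²Y - YZ²X)`, and after multiplying
by `[2] = v + v⁻¹` the Serre relations turn both brackets into `XZ²Y - YZ²X`, so the whole
expression becomes `(v + v⁻¹ - [2]) (XZ²Y - YZ²X) = 0`. It remains that `[2] ≠ 0` in `ℚ(v^{1/2})`.
-/

theorem Commute.qcomm_of_serre {K R : Type*} [Field K] [Ring R] [Algebra K R] {s : K}
    (h2 : s ^ 2 + (s ^ 2)⁻¹ ≠ 0) {X Y Z : R} (hXY : Commute X Y)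
    (hX : Z ^ 2 * X - (s ^ 2 + (s ^ 2)⁻¹) • (Z * X * Z) + X * Z ^ 2 = 0)
    (hY : Z ^ 2 * Y - (s ^ 2 + (s ^ 2)⁻¹) • (Z * Y * Z) + Y * Z ^ 2 = 0) :
    Commute (s • (Z * X) - s⁻¹ • (X * Z)) (s • (Z * Y) - s⁻¹ • (Y * Z)) := by
  set q := s ^ 2 + (s ^ 2)⁻¹ with hq
  have hs : s ≠ 0 := by rintro rfl; simp [q] at h2
  set D := X * Z ^ 2 * Y - Y * Z ^ 2 * X
  have hL : q • (Z * X * Z * Y - Z * Y * Z * X) = D := by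
    have h := congr($hX * Y - $hY * X)
    simp only [D, smul_sub, smul_mul_assoc, sub_mul, add_mul, zero_mul, mul_assoc, pow_two,
      hXY.eq] at h ⊢
    linear_combination (norm := module) -h
  have hR : q • (X * Z * Y * Z - Y * Z * X * Z) = D := by
    have h := congr(X * $hY - Y * $hX)
    simp only [D, smul_sub, mul_smul_comm, mul_sub, mul_add, mul_zero, mul_assoc, pow_two,
      hXY.left_comm] at h ⊢
    linear_combination (norm := module) -h
  refine smul_right_injective R h2 ?_
  show q • (_ * _) = q • (_ * _)
  simp only [D, smul_sub, mul_sub, sub_mul, smul_mul_smul_comm, mul_assoc, pow_two,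
    hXY.left_comm, mul_inv_cancel₀ hs, inv_mul_cancel₀ hs, one_smul] at hL hR ⊢
  rw [hq] at hL hR ⊢
  linear_combination (norm := module) (s ^ 2) • hL + (s⁻¹ ^ 2) • hR

namespace SDHall

theorem v_add_inv_ne_zero : v + v⁻¹ ≠ 0 := by
  have hv : v ≠ 0 := pow_ne_zero _ RatFunc.X_ne_zero
  have hpoly : v * (v + v⁻¹)
      = algebraMap (Polynomial ℚ) F₀ (Polynomial.X ^ 4 + Polynomial.C 1) := by
    rw [mul_add, mul_inv_cancel₀ hv]
    simp [v, sq, ← pow_add]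
  refine fun h => Polynomial.X_pow_add_C_ne_zero (n := 4) (by norm_num) (1 : ℚ) ?_
  rwa [h, mul_zero, eq_comm, map_eq_zero_iff _ (IsFractionRing.injective _ _)] at hpoly

variable {I : Type} {a : I → I → ℤ} {i j : I}

theorem E_commute (h : a i j = 0) (m : ℤ) : Commute (E a i m) (E a j m) := by
  simpa only [commute_iff_eq, E, map_mul]
    using RingQuot.mkAlgHom_rel F₀ (Rel.sd2 (a := a) i j m h)

theorem E_serre (h : a i j = -1) (m : ℤ) :
    E a i m ^ 2 * E a j m - (v + v⁻¹) • (E a i m * E a j m * E a i m) + E a j m * E a i m ^ 2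
      = 0 := by
  simpa only [E, map_add, map_sub, map_smul, map_mul, map_pow, map_zero]
    using RingQuot.mkAlgHom_rel F₀ (Rel.sd3 (a := a) i j m h)

end SDHall

open SDHall

theorem sigma_images_commute_general (I : Type) (a : I → I → ℤ)
    (hA : IsCartan a) (i j k : I) (hij : a i j = 0) (hik : a i k = -1)
    (hjk : a j k = -1) (m : ℤ) :
    T a k i m * T a k j m = T a k j m * T a k i m := by
  have hki : a k i = -1 := hA.1 k i ▸ hik
  have hkj : a k j = -1 := hA.1 k j ▸ hjk
  exact (((E_commute hij m).qcomm_of_serre v_add_inv_ne_zero (E_serre hki m)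
    (E_serre hkj m)).smul_left _).smul_right _ |>.eq

/-- For `a_{ij} = 0`, `a_{ik} = −1`, `a_{jk} = −1` and `m ∈ ℤ`, the
elements `Fᵢ := (v^{1/2}E_{k,m}E_{i,m} − v^{−1/2}E_{i,m}E_{k,m})/(v − v^{−1})` and
`Fⱼ := (v^{1/2}E_{k,m}E_{j,m} − v^{−1/2}E_{j,m}E_{k,m})/(v − v^{−1})` commute in `𝒜`. -/
theorem sigma_images_commute (I : Type) [Fintype I] (a : I → I → ℤ)
    (hA : IsCartan a) (i j k : I) (hij : a i j = 0) (hik : a i k = -1)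
    (hjk : a j k = -1) (m : ℤ) :
    T a k i m * T a k j m = T a k j m * T a k i m :=
  sigma_images_commute_general I a hA i j k hij hik hjk m
end
end
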